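/- Let 0 < α ≤ 1, a ∈ C[0,T] with y, z ∈ C[0,T] both satisfying the integral equation u(t) = 1 - I^α(a·u)(t) on [0,T]. Then y = z (uniqueness of the canonical solution via Gronwall-type iteration): indeed |y(t) - z(t)| ≤ ‖y-z‖_∞ (‖a‖_∞)^k t^{kα}/Γ(kα+1) for every k ≥ 0, hence y(t) = z(t). -/

import Mathlib

open MeasureTheory Real Filter Set

/-- Riemann–Liouville fractional integral of order `α` (with the convention `I^0 f = f`). -/
noncomputable def rl (α : ℝ) (f : ℝ → ℝ) : ℝ → ℝ :=
  if α = 0 then f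
  else fun t => (Real.Gamma α)⁻¹ * ∫ τ in (0:ℝ)..t, (t - τ) ^ (α - 1) * f τ

/-- Caputo fractional derivative of order `α` with `n - 1 < α ≤ n`. -/
noncomputable def caputo (n : ℕ) (α : ℝ) (f : ℝ → ℝ) : ℝ → ℝ :=
  deriv^[n] (rl ((n : ℝ) - α)
    (fun s => f s - ∑ k ∈ Finset.range n, iteratedDeriv k f 0 * s ^ k / (Nat.factorial k)))


lemma beta_real {s t a : ℝ} (hs : 0 < s) (ht : 0 < t) (ha : 0 < a) :
    ∫ x in (0:ℝ)..a, x ^ (s - 1) * (a - x) ^ (t - 1) =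
      a ^ (s + t - 1) * (Real.Gamma s * Real.Gamma t / Real.Gamma (s + t)) := by
  have hst : (0:ℝ) < s + t := by linarith
  have h1 : ((∫ x in (0:ℝ)..a, x ^ (s - 1) * (a - x) ^ (t - 1) : ℝ) : ℂ)
      = ∫ x in (0:ℝ)..a, (x : ℂ) ^ ((s:ℂ) - 1) * ((a : ℂ) - x) ^ ((t:ℂ) - 1) := by
    rw [← intervalIntegral.integral_ofReal]
    refine intervalIntegral.integral_congr (fun x hx => ?_)
    rw [uIcc_of_le ha.le] at hx
    push_cast
    rw [Complex.ofReal_cpow hx.1 (s - 1), Complex.ofReal_cpow (by linarith [hx.2] : (0:ℝ) ≤ a - x) (t - 1)]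
    push_cast
    ring
  have h2 := Complex.betaIntegral_scaled (s:ℂ) (t:ℂ) ha
  have h3 := Complex.Gamma_mul_Gamma_eq_betaIntegral
    (s := (s:ℂ)) (t := (t:ℂ)) (by simpa using hs) (by simpa using ht)
  have hG : Complex.Gamma ((s:ℂ) + (t:ℂ)) ≠ 0 := by
    rw [show ((s:ℂ) + (t:ℂ)) = ((s + t : ℝ) : ℂ) by push_cast; ring, Complex.Gamma_ofReal]
    exact_mod_cast (Real.Gamma_pos_of_pos hst).ne'
  have h4 : Complex.betaIntegral (s:ℂ) (t:ℂ)
      = Complex.Gamma s * Complex.Gamma t / Complex.Gamma ((s:ℂ) + t) := by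
    field_simp [h3]
    rw [h3]; ring
  apply Complex.ofReal_injective
  rw [h1, h2, h4]
  rw [show ((s:ℂ) + (t:ℂ) - 1) = ((s + t - 1 : ℝ) : ℂ) by push_cast; ring,
    ← Complex.ofReal_cpow ha.le, show ((s:ℂ) + (t:ℂ)) = ((s + t : ℝ) : ℂ) by push_cast; ring]
  rw [Complex.Gamma_ofReal, Complex.Gamma_ofReal, Complex.Gamma_ofReal]
  push_cast
  ring

lemma ker_integrable {α : ℝ} (hα : 0 < α) (t : ℝ) :
    IntervalIntegrable (fun τ => (t - τ) ^ (α - 1)) volume 0 t := by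
  have h := (intervalIntegral.intervalIntegrable_rpow' (a := 0) (b := t)
    (by linarith : (-1:ℝ) < α - 1)).comp_sub_left t
  simpa using h.symm

lemma ker_mul_integrable {α : ℝ} (hα : 0 < α) {t T : ℝ} (ht : t ∈ Icc (0:ℝ) T)
    {g : ℝ → ℝ} (hg : ContinuousOn g (Icc 0 T)) :
    IntervalIntegrable (fun τ => (t - τ) ^ (α - 1) * g τ) volume 0 t := by
  refine (ker_integrable hα t).mul_continuousOn (hg.mono ?_)
  rw [uIcc_of_le ht.1]
  exact Icc_subset_Icc le_rfl ht.2


theorem stmt19 (α T M C : ℝ) (hα0 : 0 < α) (hα1 : α ≤ 1) (hT : 0 < T)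
    (a y z : ℝ → ℝ) (ha : ContinuousOn a (Set.Icc 0 T))
    (hy : ContinuousOn y (Set.Icc 0 T)) (hz : ContinuousOn z (Set.Icc 0 T))
    (hM : ∀ t ∈ Set.Icc (0:ℝ) T, |a t| ≤ M)
    (hC : ∀ t ∈ Set.Icc (0:ℝ) T, |y t - z t| ≤ C)
    (hyeq : ∀ t ∈ Set.Icc (0:ℝ) T, y t = 1 - rl α (fun s => a s * y s) t)
    (hzeq : ∀ t ∈ Set.Icc (0:ℝ) T, z t = 1 - rl α (fun s => a s * z s) t) :
    (∀ k : ℕ, ∀ t ∈ Set.Icc (0:ℝ) T,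
        |y t - z t| ≤ C * M ^ k * t ^ ((k:ℝ) * α) / Real.Gamma ((k:ℝ) * α + 1)) ∧
      ∀ t ∈ Set.Icc (0:ℝ) T, y t = z t := by
  have hαne : α ≠ 0 := hα0.ne'
  have h0T : (0:ℝ) ∈ Icc (0:ℝ) T := ⟨le_refl 0, hT.le⟩
  have hC0 : 0 ≤ C := (abs_nonneg _).trans (hC 0 h0T)
  have hM0 : 0 ≤ M := (abs_nonneg _).trans (hM 0 h0T)
  have hGα : 0 < Real.Gamma α := Real.Gamma_pos_of_pos hα0
  -- key identity
  have key : ∀ t ∈ Icc (0:ℝ) T, y t - z t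
      = (Real.Gamma α)⁻¹ * ∫ τ in (0:ℝ)..t, (t - τ) ^ (α - 1) * (a τ * (z τ - y τ)) := by
    intro t ht
    have h1 := hyeq t ht
    have h2 := hzeq t ht
    rw [rl, if_neg hαne] at h1 h2
    have hiy := ker_mul_integrable hα0 ht (ha.mul hy)
    have hiz := ker_mul_integrable hα0 ht (ha.mul hz)
    have : y t - z t = (Real.Gamma α)⁻¹ *
        ((∫ τ in (0:ℝ)..t, (t - τ) ^ (α - 1) * (a τ * z τ))
          - ∫ τ in (0:ℝ)..t, (t - τ) ^ (α - 1) * (a τ * y τ)) := by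
      rw [h1, h2]; ring
    rw [this, ← intervalIntegral.integral_sub (f := fun τ => (t - τ) ^ (α - 1) * (a τ * z τ))
      (g := fun τ => (t - τ) ^ (α - 1) * (a τ * y τ)) hiz hiy]
    congr 1
    refine intervalIntegral.integral_congr (fun τ _ => ?_)
    ring
  -- the bound by induction
  have main : ∀ k : ℕ, ∀ t ∈ Icc (0:ℝ) T,
      |y t - z t| ≤ C * M ^ k * t ^ ((k:ℝ) * α) / Real.Gamma ((k:ℝ) * α + 1) := by
    intro k
    induction k with
    | zero =>
      intro t ht
      simpa [Real.Gamma_one] using hC t ht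
    | succ k ih =>
      intro t ht
      have hGk : 0 < Real.Gamma ((k:ℝ) * α + 1) := Real.Gamma_pos_of_pos (by positivity)
      have hGk1 : 0 < Real.Gamma (((k:ℝ)+1) * α + 1) := Real.Gamma_pos_of_pos (by positivity)
      rcases eq_or_lt_of_le ht.1 with rfl | htpos
      · have h0 := key 0 ht
        rw [intervalIntegral.integral_same, mul_zero] at h0
        rw [h0, abs_zero]
        positivity
      · -- t > 0
        have habs : |y t - z t| ≤ (Real.Gamma α)⁻¹ *
            |∫ τ in (0:ℝ)..t, (t - τ) ^ (α - 1) * (a τ * (z τ - y τ))| := by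
          rw [key t ht, abs_mul, abs_inv, abs_of_pos hGα]
        set B : ℝ := M * (C * M ^ k) / Real.Gamma ((k:ℝ) * α + 1) with hB
        have hint1 : IntervalIntegrable
            (fun τ => |(t - τ) ^ (α - 1) * (a τ * (z τ - y τ))|) volume 0 t :=
          (ker_mul_integrable hα0 ht (ha.mul (hz.sub hy))).abs
        have hcont2 : ContinuousOn (fun τ : ℝ => B * τ ^ ((k:ℝ)*α)) (Icc 0 T) := by
          refine ContinuousOn.mul continuousOn_const (fun x _ => ?_)
          exact (Real.continuousAt_rpow_const x _ (Or.inr (by positivity))).continuousWithinAt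
        have hint2 : IntervalIntegrable
            (fun τ => (t - τ) ^ (α - 1) * (B * τ ^ ((k:ℝ)*α))) volume 0 t :=
          ker_mul_integrable hα0 ht hcont2
        have hmono : |∫ τ in (0:ℝ)..t, (t - τ) ^ (α - 1) * (a τ * (z τ - y τ))|
            ≤ ∫ τ in (0:ℝ)..t, (t - τ) ^ (α - 1) * (B * τ ^ ((k:ℝ)*α)) := by
          refine (intervalIntegral.abs_integral_le_integral_abs ht.1).trans ?_
          refine intervalIntegral.integral_mono_on ht.1 hint1 hint2 (fun τ hτ => ?_)
          have hτT : τ ∈ Icc (0:ℝ) T := ⟨hτ.1, hτ.2.trans ht.2⟩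
          have hker : (0:ℝ) ≤ (t - τ) ^ (α - 1) :=
            Real.rpow_nonneg (by linarith [hτ.2]) _
          rw [abs_mul, abs_of_nonneg hker]
          refine mul_le_mul_of_nonneg_left ?_ hker
          rw [abs_mul]
          have h1 : |z τ - y τ| ≤ C * M ^ k * τ ^ ((k:ℝ)*α) / Real.Gamma ((k:ℝ)*α + 1) := by
            rw [abs_sub_comm]; exact ih τ hτT
          calc |a τ| * |z τ - y τ|
              ≤ M * (C * M ^ k * τ ^ ((k:ℝ)*α) / Real.Gamma ((k:ℝ)*α + 1)) :=
                mul_le_mul (hM τ hτT) h1 (abs_nonneg _) hM0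
            _ = B * τ ^ ((k:ℝ)*α) := by rw [hB]; ring
        have hbeta : ∫ τ in (0:ℝ)..t, (t - τ) ^ (α - 1) * (B * τ ^ ((k:ℝ)*α))
            = B * (t ^ (((k:ℝ)*α + 1) + α - 1) *
              (Real.Gamma ((k:ℝ)*α + 1) * Real.Gamma α / Real.Gamma (((k:ℝ)*α + 1) + α))) := by
          have hcongr : ∀ τ ∈ uIcc (0:ℝ) t,
              (t - τ) ^ (α - 1) * (B * τ ^ ((k:ℝ)*α))
                = B * (τ ^ (((k:ℝ)*α + 1) - 1) * (t - τ) ^ (α - 1)) := by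
            intro τ _
            rw [show ((k:ℝ)*α + 1) - 1 = (k:ℝ)*α by ring]
            ring
          rw [intervalIntegral.integral_congr hcongr, intervalIntegral.integral_const_mul,
            beta_real (by positivity) hα0 htpos]
        rw [hbeta] at hmono
        refine habs.trans ((mul_le_mul_of_nonneg_left hmono (by positivity)).trans ?_)
        have hexp : ((k:ℝ)*α + 1) + α - 1 = ((k:ℝ)+1) * α := by ring
        have harg : ((k:ℝ)*α + 1) + α = ((k:ℝ)+1) * α + 1 := by ring
        rw [hexp, harg, hB]
        have : ((k:ℕ) + 1 : ℕ) = ((k:ℝ) + 1) := by push_cast; ring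
        push_cast
        apply le_of_eq
        field_simp
        ring
  refine ⟨main, fun t ht => ?_⟩
  have ht0 : (0:ℝ) ≤ t := ht.1
  set x : ℝ := M * t ^ α with hx
  have hx0 : 0 ≤ x := by positivity
  have hseq : ∀ k : ℕ, |y t - z t| ≤ C * x ^ k / Real.Gamma ((k:ℝ)*α + 1) := by
    intro k
    have h := main k t ht
    have hpow : M ^ k * t ^ ((k:ℝ)*α) = x ^ k := by
      rw [hx, mul_pow, mul_comm (k:ℝ) α, Real.rpow_mul ht0, Real.rpow_natCast]
    calc |y t - z t| ≤ C * M ^ k * t ^ ((k:ℝ)*α) / Real.Gamma ((k:ℝ)*α + 1) := h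
      _ = C * x ^ k / Real.Gamma ((k:ℝ)*α + 1) := by rw [← hpow]; ring
  set Y : ℝ := max x 1 with hYdef
  have hY1 : (1:ℝ) ≤ Y := le_max_right _ _
  have hY0 : (0:ℝ) ≤ Y := zero_le_one.trans hY1
  set Z : ℝ := Y ^ (α⁻¹ : ℝ) with hZdef
  have hZ1 : (1:ℝ) ≤ Z := Real.one_le_rpow hY1 (by positivity)
  have hZ0 : (0:ℝ) ≤ Z := zero_le_one.trans hZ1
  have hlim0 : Tendsto (fun m : ℕ => C * Z * (Z ^ m / m.factorial)) atTop (nhds 0) := by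
    simpa using (FloorSemiring.tendsto_pow_div_factorial_atTop Z).const_mul (C*Z)
  have hmulα : Tendsto (fun k : ℕ => (k:ℝ) * α) atTop atTop :=
    Tendsto.atTop_mul_const hα0 tendsto_natCast_atTop_atTop
  have hfloor : Tendsto (fun k : ℕ => ⌊(k:ℝ)*α⌋₊) atTop atTop :=
    tendsto_nat_floor_atTop.comp hmulα
  have hlim : Tendsto (fun k : ℕ =>
      C * Z * (Z ^ (⌊(k:ℝ)*α⌋₊) / (⌊(k:ℝ)*α⌋₊).factorial)) atTop (nhds 0) :=
    hlim0.comp hfloor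
  have hev : ∀ᶠ k : ℕ in atTop, |y t - z t|
      ≤ C * Z * (Z ^ (⌊(k:ℝ)*α⌋₊) / (⌊(k:ℝ)*α⌋₊).factorial) := by
    filter_upwards [hmulα.eventually_ge_atTop 1] with k hk1
    set n : ℕ := ⌊(k:ℝ)*α⌋₊ with hn
    have hn1 : 1 ≤ n := Nat.le_floor (by exact_mod_cast hk1)
    have hkα0 : (0:ℝ) ≤ (k:ℝ)*α := by positivity
    have hfl : (n:ℝ) ≤ (k:ℝ)*α := Nat.floor_le hkα0
    have hfl2 : (k:ℝ)*α < (n:ℝ) + 1 := Nat.lt_floor_add_one _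
    -- x^k ≤ Z^(n+1)
    have hxk : x ^ k ≤ Z ^ (n+1) := by
      have h1 : x ^ k ≤ Y ^ k := pow_le_pow_left₀ hx0 (le_max_left _ _) k
      have h2 : Y ^ k = Y ^ ((k:ℕ):ℝ) := (Real.rpow_natCast Y k).symm
      have h3 : Y ^ ((k:ℕ):ℝ) ≤ Y ^ (α⁻¹ * ((n:ℝ)+1)) := by
        refine Real.rpow_le_rpow_of_exponent_le hY1 ?_
        rw [← lt_div_iff₀ hα0] at hfl2
        calc ((k:ℕ):ℝ) = (k:ℝ) := rfl
          _ ≤ ((n:ℝ)+1)/α := le_of_lt hfl2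
          _ = α⁻¹ * ((n:ℝ)+1) := by ring
      have h4 : Y ^ (α⁻¹ * ((n:ℝ)+1)) = Z ^ (n+1) := by
        rw [Real.rpow_mul hY0, show ((n:ℝ)+1) = ((n+1 : ℕ):ℝ) by push_cast; ring,
          Real.rpow_natCast]
      calc x ^ k ≤ Y ^ k := h1
        _ = Y ^ ((k:ℕ):ℝ) := h2
        _ ≤ Y ^ (α⁻¹ * ((n:ℝ)+1)) := h3
        _ = Z ^ (n+1) := h4
    -- Γ(kα+1) ≥ n!
    have hGam : (n.factorial : ℝ) ≤ Real.Gamma ((k:ℝ)*α + 1) := by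
      have hmem1 : ((n:ℝ)+1) ∈ Ici (2:ℝ) := by
        simp only [mem_Ici]
        have : (1:ℝ) ≤ (n:ℝ) := by exact_mod_cast hn1
        linarith
      have hmem2 : ((k:ℝ)*α + 1) ∈ Ici (2:ℝ) := by
        simp only [mem_Ici]; linarith
      have := Real.Gamma_strictMonoOn_Ici.monotoneOn hmem1 hmem2 (by linarith)
      rwa [Real.Gamma_nat_eq_factorial] at this
    have hfac : (0:ℝ) < (n.factorial : ℝ) := by exact_mod_cast n.factorial_pos
    calc |y t - z t| ≤ C * x ^ k / Real.Gamma ((k:ℝ)*α + 1) := hseq k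
      _ ≤ (C * Z ^ (n+1)) / (n.factorial : ℝ) := by
          refine div_le_div₀ (by positivity) ?_ hfac hGam
          exact mul_le_mul_of_nonneg_left hxk hC0
      _ = C * Z * (Z ^ n / (n.factorial : ℝ)) := by rw [pow_succ]; ring
  have hle0 : |y t - z t| ≤ 0 := ge_of_tendsto hlim hev
  have := abs_nonpos_iff.mp hle0
  linarith [sub_eq_zero.mp this]
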